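/- arXiv:2510.17177 — 3 statements merged into one kernel-verified Lean document; each statement's English description precedes it below -/
import Mathlib

section
/- If an infinite word x over a finite alphabet is not ultimately periodic, then its subword complexity satisfies p(n+1, x) ≥ p(n, x) + 1 for every n ≥ 0, and hence p(n, x) ≥ n + 1 for all n ≥ 0. -/
open Filter

variable {A : Type*}

/-- The factor of the infinite word `x` of length `n` starting at position `j` (0-indexed). -/
def subwordAt (x : ℕ → A) (j n : ℕ) : List A := (List.range n).map fun i => x (j + i)

/-- `w` is a factor (subword) of the infinite word `x`. -/
def IsFactor (w : List A) (x : ℕ → A) : Prop := ∃ j, subwordAt x j w.length = w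

/-- The subword complexity `p(n, x)`: the number of distinct length-`n` factors of `x`. -/
noncomputable def complexity (x : ℕ → A) (n : ℕ) : ℕ :=
  Set.ncard {w : List A | w.length = n ∧ IsFactor w x}

/-- `x` is ultimately periodic. -/
def UltimatelyPeriodic (x : ℕ → A) : Prop := ∃ N T, 0 < T ∧ ∀ i ≥ N, x (i + T) = x i

/-- `w` is a left-special factor of `x`. -/
def LeftSpecial (w : List A) (x : ℕ → A) : Prop :=
  ∃ a b : A, a ≠ b ∧ IsFactor (a :: w) x ∧ IsFactor (b :: w) x

/-- `w` is a right-special factor of `x`. -/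
def RightSpecial (w : List A) (x : ℕ → A) : Prop :=
  ∃ a b : A, a ≠ b ∧ IsFactor (w ++ [a]) x ∧ IsFactor (w ++ [b]) x

/-- `w` occurs infinitely many times in `x`. -/
def OccursInfinitely (w : List A) (x : ℕ → A) : Prop :=
  {j : ℕ | subwordAt x j w.length = w}.Infinite

/-- `x` is `n`-recurrent: every length-`n` factor occurs infinitely often. -/
def NRecurrent (n : ℕ) (x : ℕ → A) : Prop :=
  ∀ j : ℕ, {i : ℕ | subwordAt x i n = subwordAt x j n}.Infinite

/-- The shift of `x` by `s` places. -/
def shiftWord (x : ℕ → A) (s : ℕ) : ℕ → A := fun i => x (s + i)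

/-- `s_m`: the length of the `m`-th non-recurrent prefix of `x`. -/
noncomputable def srec (x : ℕ → A) (m : ℕ) : ℕ := sInf {s : ℕ | NRecurrent m (shiftWord x s)}

/-- `z_m`: the maximal `m`-recurrent tail of `x`, so that `x = a_m z_m`. -/
noncomputable def ztail (x : ℕ → A) (m : ℕ) : ℕ → A := shiftWord x (srec x m)

/-- The repetition function `r(n, x)`: the least `m ≥ 1` such that
`x_{m+1} … x_{m+n} = x_{i+1} … x_{i+n}` for some `0 ≤ i < m`. -/
noncomputable def repFn (x : ℕ → A) (n : ℕ) : ℕ :=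
  sInf {m : ℕ | 0 < m ∧ ∃ i < m, subwordAt x m n = subwordAt x i n}

/-- A right-special factor `w` is essential if it is a suffix of right-special
factors of every length `m ≥ |w|`. -/
def EssentialRightSpecial (w : List A) (x : ℕ → A) : Prop :=
  RightSpecial w x ∧
    ∀ m, w.length ≤ m → ∃ W : List A, W.length = m ∧ RightSpecial W x ∧ W.drop (m - w.length) = w

/-- `C` is (the word read along) a cycle at `w` in the Rauzy graph `𝒢_n(y)`:
it has length `> n`, prefix `w`, suffix `w`, and is a factor of `y`. -/
def IsCycleAt (y : ℕ → A) (n : ℕ) (w C : List A) : Prop :=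
  n < C.length ∧ C.take n = w ∧ C.drop (C.length - n) = w ∧ IsFactor C y

/-- The Rauzy graph `𝒢_n(y)` is of `∞`-shape with bi-special vertex `w`
and the two (simple) cycles `U` and `V`. -/
def InftyShape (y : ℕ → A) (n : ℕ) (w U V : List A) : Prop :=
  w.length = n ∧ LeftSpecial w y ∧ RightSpecial w y ∧
  (∀ v : List A, v.length = n → IsFactor v y → (LeftSpecial v y ∨ RightSpecial v y) → v = w) ∧
  IsCycleAt y n w U ∧ IsCycleAt y n w V ∧ U ≠ V ∧
  (∀ j, 0 < j → j < U.length - n → (U.drop j).take n ≠ w) ∧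
  (∀ j, 0 < j → j < V.length - n → (V.drop j).take n ≠ w) ∧
  (∀ v : List A, v.length = n → IsFactor v y →
    (∃ j ≤ U.length - n, (U.drop j).take n = v) ∨ (∃ j ≤ V.length - n, (V.drop j).take n = v))

/-- The word read along the concatenated path `U V^b U`, where `U`, `V` are
cycles at a vertex of length `n` (gluing overlaps of length `n`). -/
def cyclePow (n : ℕ) (U V : List A) (b : ℕ) : List A :=
  U ++ (List.replicate b (V.drop n)).flatten ++ U.drop n

/-- The irrationality exponent of a real number, valued in `ℝ≥0∞`. -/
noncomputable def irrationalityExponent (ξ : ℝ) : ENNReal :=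
  ⨆ (μ : ℝ) (_ : {q : ℕ | 0 < q ∧ ∃ p : ℤ, |ξ - p / q| < 1 / (q : ℝ) ^ μ}.Infinite),
    ENNReal.ofReal μ

section MH

variable {A : Type*}

lemma subwordAt_length (x : ℕ → A) (j n : ℕ) : (subwordAt x j n).length = n := by
  simp [subwordAt]

lemma subwordAt_succ (x : ℕ → A) (j n : ℕ) :
    subwordAt x j (n + 1) = subwordAt x j n ++ [x (j + n)] := by
  simp [subwordAt, List.range_succ]

lemma subwordAt_succ_take (x : ℕ → A) (j n : ℕ) :
    (subwordAt x j (n + 1)).take n = subwordAt x j n := by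
  rw [subwordAt_succ, List.take_append_of_le_length (by simp [subwordAt_length]),
    List.take_of_length_le (by simp [subwordAt_length])]

lemma isFactor_subwordAt (x : ℕ → A) (j n : ℕ) : IsFactor (subwordAt x j n) x :=
  ⟨j, by rw [subwordAt_length]⟩

def factorSet (x : ℕ → A) (n : ℕ) : Set (List A) := {w | w.length = n ∧ IsFactor w x}

lemma factorSet_finite [Fintype A] (x : ℕ → A) (n : ℕ) : (factorSet x n).Finite :=
  (List.finite_length_eq A n).subset fun _ hw => hw.1

lemma mem_factorSet_iff (x : ℕ → A) (n : ℕ) (w : List A) :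
    w ∈ factorSet x n ↔ ∃ j, w = subwordAt x j n := by
  constructor
  · rintro ⟨hl, j, hj⟩
    exact ⟨j, by rw [← hj, hl]⟩
  · rintro ⟨j, rfl⟩
    exact ⟨subwordAt_length x j n, isFactor_subwordAt x j n⟩

lemma image_take_factorSet (x : ℕ → A) (n : ℕ) :
    (fun w : List A => w.take n) '' factorSet x (n + 1) = factorSet x n := by
  ext w
  simp only [Set.mem_image]
  constructor
  · rintro ⟨v, hv, rfl⟩
    obtain ⟨j, rfl⟩ := (mem_factorSet_iff x _ v).1 hv
    rw [subwordAt_succ_take]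
    exact (mem_factorSet_iff x n _).2 ⟨j, rfl⟩
  · intro hw
    obtain ⟨j, rfl⟩ := (mem_factorSet_iff x n w).1 hw
    exact ⟨subwordAt x j (n + 1), (mem_factorSet_iff x _ _).2 ⟨j, rfl⟩,
      subwordAt_succ_take x j n⟩

lemma complexity_mono [Fintype A] (x : ℕ → A) (n : ℕ) :
    complexity x n ≤ complexity x (n + 1) := by
  have := Set.ncard_image_le (f := fun w : List A => w.take n)
    (s := factorSet x (n + 1)) (factorSet_finite x (n + 1))
  rwa [image_take_factorSet] at this

/-- If the truncation map is injective (determinism), the word is ultimately periodic. -/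
lemma ultimatelyPeriodic_of_deterministic [Fintype A] (x : ℕ → A) (n : ℕ)
    (D : ∀ i j : ℕ, subwordAt x i n = subwordAt x j n → x (i + n) = x (j + n)) :
    UltimatelyPeriodic x := by
  -- pigeonhole: two equal windows
  obtain ⟨i, j, hne, hg⟩ : ∃ i j : ℕ, i ≠ j ∧ subwordAt x i n = subwordAt x j n := by
    obtain ⟨i, j, hne, hg⟩ := Finite.exists_ne_map_eq_of_infinite
      (fun j : ℕ => (fun t : Fin n => x (j + t)))
    refine ⟨i, j, hne, ?_⟩
    simp only [subwordAt, List.map_inj_left, List.mem_range]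
    intro t ht
    exact congrFun hg ⟨t, ht⟩
  wlog hij : i < j generalizing i j
  · exact this j i hne.symm hg.symm ((hne.lt_or_gt).resolve_left hij)
  have key : ∀ t : ℕ, x (i + t) = x (j + t) := by
    intro t
    induction t using Nat.strong_induction_on with
    | _ t ih =>
      rcases lt_or_ge t n with ht | ht
      · have := congrArg (fun l => l[t]?) hg
        simpa [subwordAt, List.getElem?_map, List.getElem?_range, ht] using this
      · have hwin : subwordAt x (i + (t - n)) n = subwordAt x (j + (t - n)) n := by
          simp only [subwordAt, List.map_inj_left, List.mem_range]
          intro s hs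
          have h1 : t - n + s < t := by omega
          have := ih (t - n + s) h1
          rw [show i + (t - n) + s = i + (t - n + s) by ring,
            show j + (t - n) + s = j + (t - n + s) by ring]
          exact this
        have := D _ _ hwin
        rw [show i + (t - n) + n = i + t by omega,
          show j + (t - n) + n = j + t by omega] at this
        exact this
  refine ⟨i, j - i, by omega, fun k hk => ?_⟩
  have h1 := key (k - i)
  have h2 : i + (k - i) = k := by omega
  have h3 : j + (k - i) = k + (j - i) := by omega
  rw [h2, h3] at h1
  exact h1.symm

lemma complexity_strict [Fintype A] (x : ℕ → A) (hx : ¬ UltimatelyPeriodic x) (n : ℕ) :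
    complexity x n + 1 ≤ complexity x (n + 1) := by
  by_contra h
  push_neg at h
  have hle : complexity x (n + 1) ≤ complexity x n := by omega
  have heq : ((fun w : List A => w.take n) '' factorSet x (n + 1)).ncard
      = (factorSet x (n + 1)).ncard := by
    have h1 : ((fun w : List A => w.take n) '' factorSet x (n + 1)).ncard
        = complexity x n := by rw [image_take_factorSet]; rfl
    have h2 : (factorSet x (n + 1)).ncard = complexity x (n + 1) := rfl
    have := complexity_mono x n
    omega
  have hinj := Set.injOn_of_ncard_image_eq heq (factorSet_finite x (n + 1))
  refine hx (ultimatelyPeriodic_of_deterministic x n ?_)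
  intro i j hg
  have hi : subwordAt x i (n + 1) ∈ factorSet x (n + 1) := (mem_factorSet_iff x _ _).2 ⟨i, rfl⟩
  have hj : subwordAt x j (n + 1) ∈ factorSet x (n + 1) := (mem_factorSet_iff x _ _).2 ⟨j, rfl⟩
  have htake : (subwordAt x i (n + 1)).take n = (subwordAt x j (n + 1)).take n := by
    rw [subwordAt_succ_take, subwordAt_succ_take]; exact hg
  have := hinj hi hj htake
  rw [subwordAt_succ, subwordAt_succ, hg] at this
  have := List.append_cancel_left this
  simpa using this

end MH

theorem complexity_strict_growth_of_not_ultimatelyPeriodic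
    {A : Type*} [Fintype A] (x : ℕ → A) (hx : ¬ UltimatelyPeriodic x) :
    (∀ n : ℕ, complexity x n + 1 ≤ complexity x (n + 1)) ∧
      (∀ n : ℕ, n + 1 ≤ complexity x n)  := by
  have h0 : complexity x 0 = 1 := by
    have : factorSet x 0 = {([] : List A)} := by
      ext w
      simp [mem_factorSet_iff, subwordAt]
    show (factorSet x 0).ncard = 1
    rw [this, Set.ncard_singleton]
  refine ⟨complexity_strict x hx, fun n => ?_⟩
  induction n with
  | zero => omega
  | succ n ih => have := complexity_strict x hx n; omega
end

section
/- Let x be an infinite word with rep(x) := lim inf_{n→∞} r(n,x)/n. Then the irrationality exponent of ξ = Σ_{j≥1} x_j/b^j (for integer b ≥ 2, x over {0,...,b−1}, x not ultimately periodic) satisfies μ(ξ) ≥ 1 + 1/rep(x). -/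
open Filter

variable {A : Type*}

/-!
Let `r = r(n, x)` and `i < r` with `x_{r+1} … x_{r+n} = x_{i+1} … x_{i+n}`. Then `b^r ξ` and
`b^i ξ` have fractional parts within `b^{-n}` of each other, so `q = b^r - b^i` has an integer
`p` with `|qξ - p| ≤ b^{-n}`. As `q < b^r`, this gives `|ξ - p/q| < q^{-(1+τ)}` as soon as
`τ r < n`, which happens for infinitely many `n` whenever `1/τ > rep(x)`. Since `x` is not
ultimately periodic, `r(n, x) → ∞`, so these denominators `q ≥ r` are unbounded.
-/

theorem subwordAt_eq_subwordAt_iff {x : ℕ → A} {m i n : ℕ} :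
    subwordAt x m n = subwordAt x i n ↔ ∀ t < n, x (m + t) = x (i + t) := by
  simp [subwordAt, List.map_inj_left]

theorem subwordAt_comp {B : Type*} (f : A → B) (x : ℕ → A) (j n : ℕ) :
    subwordAt (f ∘ x) j n = (subwordAt x j n).map f := by
  simp [subwordAt]

theorem repFn_comp {B : Type*} {f : A → B} (hf : Function.Injective f) (x : ℕ → A) :
    repFn (f ∘ x) = repFn x := by
  ext n
  simp only [repFn, subwordAt_comp, (List.map_injective_iff.mpr hf).eq_iff]

theorem UltimatelyPeriodic.comp {B : Type*} {x : ℕ → A} (hx : UltimatelyPeriodic x)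
    (f : A → B) : UltimatelyPeriodic (f ∘ x) := by
  obtain ⟨N, T, hT, h⟩ := hx
  exact ⟨N, T, hT, fun i hi => congrArg f (h i hi)⟩

theorem exists_lt_subwordAt_eq [Finite A] (x : ℕ → A) (n : ℕ) :
    ∃ m, ∃ i < m, subwordAt x m n = subwordAt x i n := by
  obtain ⟨j, k, hjk, h⟩ :=
    Finite.exists_ne_map_eq_of_infinite fun j (t : Fin n) => x (j + t)
  have hsub (j k : ℕ) (h : (fun t : Fin n => x (j + t)) = fun t : Fin n => x (k + t)) :
      subwordAt x j n = subwordAt x k n :=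
    subwordAt_eq_subwordAt_iff.mpr fun t ht => congrFun h ⟨t, ht⟩
  rcases hjk.lt_or_gt with hlt | hlt
  · exact ⟨k, j, hlt, hsub k j h.symm⟩
  · exact ⟨j, k, hlt, hsub j k h⟩

theorem repFn_spec [Finite A] (x : ℕ → A) (n : ℕ) :
    ∃ i < repFn x n, subwordAt x (repFn x n) n = subwordAt x i n := by
  obtain ⟨m, i, hi, h⟩ := exists_lt_subwordAt_eq x n
  exact (Nat.sInf_mem (⟨m, i.zero_le.trans_lt hi, i, hi, h⟩ :
    {m : ℕ | 0 < m ∧ ∃ i < m, subwordAt x m n = subwordAt x i n}.Nonempty)).2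

theorem finite_setOf_subwordAt_eq {x : ℕ → A} (hx : ¬ UltimatelyPeriodic x) {m i : ℕ}
    (hi : i < m) : {n | subwordAt x m n = subwordAt x i n}.Finite := by
  refine Set.not_infinite.mp fun hinf => hx ⟨i, m - i, Nat.sub_pos_of_lt hi, fun j hj => ?_⟩
  obtain ⟨n, hn, hjn⟩ := hinf.exists_gt (j - i)
  have := subwordAt_eq_subwordAt_iff.mp hn (j - i) hjn
  rwa [show m + (j - i) = j + (m - i) by omega, show i + (j - i) = j by omega] at this

theorem tendsto_repFn_atTop [Finite A] {x : ℕ → A} (hx : ¬ UltimatelyPeriodic x) :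
    Tendsto (repFn x) atTop atTop := by
  refine tendsto_atTop.mpr fun C => Nat.cofinite_eq_atTop ▸ eventually_cofinite.mpr ?_
  refine ((Set.finite_Iio C).biUnion fun m _ => (Set.finite_Iio m).biUnion fun i hi =>
    finite_setOf_subwordAt_eq hx hi).subset fun n hn => ?_
  obtain ⟨i, hi, h⟩ := repFn_spec x n
  simp only [Set.mem_iUnion]
  exact ⟨repFn x n, not_le.mp hn, i, hi, h⟩

namespace Real

theorem exists_pow_mul_sum_ofDigitsTerm_eq {b : ℕ} (d : ℕ → Fin b) (k : ℕ) :
    ∃ N : ℕ, (b : ℝ) ^ k * ∑ i ∈ Finset.range k, ofDigitsTerm d i = N := by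
  induction k with
  | zero => exact ⟨0, by simp⟩
  | succ k ih =>
    obtain ⟨N, hN⟩ := ih
    refine ⟨b * N + d k, ?_⟩
    have hb : (b : ℝ) ≠ 0 := Nat.cast_ne_zero.mpr (Fin.pos (d 0)).ne'
    rw [Finset.sum_range_succ, mul_add, pow_succ', mul_assoc, hN, ofDigitsTerm]
    field_simp
    push_cast
    ring

theorem exists_pow_mul_ofDigits_eq {b : ℕ} (d : ℕ → Fin b) (k : ℕ) :
    ∃ N : ℕ, (b : ℝ) ^ k * ofDigits d = N + ofDigits (fun i => d (i + k)) := by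
  obtain ⟨N, hN⟩ := exists_pow_mul_sum_ofDigitsTerm_eq d k
  have hb : (b : ℝ) ≠ 0 := Nat.cast_ne_zero.mpr (Fin.pos (d 0)).ne'
  refine ⟨N, ?_⟩
  rw [ofDigits_eq_sum_add_ofDigits d k, mul_add, hN, ← mul_assoc,
    mul_inv_cancel₀ (pow_ne_zero k hb), one_mul]

theorem exists_abs_pow_sub_pow_mul_ofDigits_sub_le {b : ℕ} (d : ℕ → Fin b) {m i n : ℕ}
    (h : ∀ t < n, d (t + m) = d (t + i)) :
    ∃ p : ℤ, |((b : ℝ) ^ m - b ^ i) * ofDigits d - p| ≤ ((b : ℝ) ^ n)⁻¹ := by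
  obtain ⟨M, hM⟩ := exists_pow_mul_ofDigits_eq d m
  obtain ⟨I, hI⟩ := exists_pow_mul_ofDigits_eq d i
  refine ⟨M - I, ?_⟩
  rw [sub_mul, hM, hI]
  convert abs_ofDigits_sub_ofDigits_le h using 2
  push_cast
  ring

end Real

theorem le_pow_sub_pow {b m i : ℕ} (hb : 2 ≤ b) (hi : i < m) : m ≤ b ^ m - b ^ i := by
  have hbi : b ^ i ≤ b ^ (m - 1) := Nat.pow_le_pow_right (by omega) (by omega)
  have hm : m - 1 < b ^ (m - 1) := Nat.lt_pow_self hb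
  have hbm : b ^ m = b * b ^ (m - 1) := by rw [← pow_succ']; congr 1; omega
  have := Nat.mul_le_mul_right (b ^ (m - 1)) hb
  omega

theorem ofReal_le_irrationalityExponent {ξ μ : ℝ}
    (h : {q : ℕ | 0 < q ∧ ∃ p : ℤ, |ξ - p / q| < 1 / (q : ℝ) ^ μ}.Infinite) :
    ENNReal.ofReal μ ≤ irrationalityExponent ξ :=
  le_iSup₂_of_le μ h le_rfl

theorem abs_sub_div_natCast_eq {ξ : ℝ} {p : ℤ} {q : ℕ} (hq : 0 < q) :
    |ξ - p / q| = |q * ξ - p| / q := by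
  have hq' : (0 : ℝ) < q := Nat.cast_pos.mpr hq
  rw [← abs_of_pos hq', ← abs_div, abs_of_pos hq']
  congr 1
  field_simp

theorem one_le_irrationalityExponent (ξ : ℝ) : 1 ≤ irrationalityExponent ξ := by
  rw [← ENNReal.ofReal_one]
  refine ofReal_le_irrationalityExponent (Set.infinite_of_forall_exists_gt fun Q => ?_)
  have hq : 0 < Q + 1 := Q.succ_pos
  refine ⟨Q + 1, ⟨hq, round ((Q + 1 : ℕ) * ξ), ?_⟩, Q.lt_succ_self⟩
  have hq' : (0 : ℝ) < (Q + 1 : ℕ) := Nat.cast_pos.mpr hq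
  rw [abs_sub_div_natCast_eq hq, Real.rpow_one, div_lt_div_iff_of_pos_right hq']
  exact (abs_sub_round _).trans_lt (by norm_num)

theorem abs_sub_div_lt_one_div_rpow {ξ τ Q K : ℝ} {p : ℤ} {q : ℕ} (hq : 0 < q)
    (hτ : 0 < τ) (hqQ : q < Q) (hQK : Q ^ τ ≤ K) (h : |q * ξ - p| ≤ K⁻¹) :
    |ξ - p / q| < 1 / (q : ℝ) ^ (1 + τ) := by
  have hq' : (0 : ℝ) < q := Nat.cast_pos.mpr hq
  have hqK : (q : ℝ) ^ τ < K := (Real.rpow_lt_rpow hq'.le hqQ hτ).trans_le hQK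
  have hK : 0 < K := (Real.rpow_pos_of_pos hq' τ).trans hqK
  rw [abs_sub_div_natCast_eq hq, Real.rpow_add hq', Real.rpow_one,
    div_lt_div_iff₀ hq' (by positivity)]
  calc |q * ξ - p| * (q * q ^ τ) ≤ K⁻¹ * (q * q ^ τ) := by gcongr
    _ < K⁻¹ * (q * K) := by gcongr
    _ = 1 * q := by field_simp

theorem ofReal_one_add_le_irrationalityExponent_ofDigits {b : ℕ} (hb : 2 ≤ b)
    {d : ℕ → Fin b} (hd : ¬ UltimatelyPeriodic d) {τ : ℝ} (hτ : 0 < τ)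
    (hfreq : ∃ᶠ n in atTop, τ * repFn d n < n) :
    ENNReal.ofReal (1 + τ) ≤ irrationalityExponent (Real.ofDigits d) := by
  refine ofReal_le_irrationalityExponent (Set.infinite_of_forall_exists_gt fun Q => ?_)
  obtain ⟨n, hn, hQ⟩ :=
    (hfreq.and_eventually ((tendsto_repFn_atTop hd).eventually_gt_atTop Q)).exists
  obtain ⟨i, hi, hsub⟩ := repFn_spec d n
  set m := repFn d n
  obtain ⟨p, hp⟩ := Real.exists_abs_pow_sub_pow_mul_ofDigits_sub_le d (m := m) (i := i)
    (n := n) fun t ht => by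
      rw [add_comm t, add_comm t]; exact subwordAt_eq_subwordAt_iff.mp hsub t ht
  have hbi : b ^ i < b ^ m := Nat.pow_lt_pow_right hb hi
  have hq : ((b ^ m - b ^ i : ℕ) : ℝ) = (b : ℝ) ^ m - b ^ i := by
    push_cast [Nat.cast_sub hbi.le]; ring
  have hb1 : (1 : ℝ) ≤ b := by exact_mod_cast (by omega : 1 ≤ b)
  refine ⟨b ^ m - b ^ i, ⟨by omega, p, abs_sub_div_lt_one_div_rpow (Q := (b : ℝ) ^ m)
    (K := (b : ℝ) ^ n) (by omega) hτ ?_ ?_ (hq ▸ hp)⟩, hQ.trans_le (le_pow_sub_pow hb hi)⟩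
  · rw [hq]
    linarith [pow_pos (zero_lt_one.trans_le hb1) i]
  · rw [← Real.rpow_natCast, ← Real.rpow_mul (by positivity), ← Real.rpow_natCast _ n]
    exact Real.rpow_le_rpow_of_exponent_le hb1 (by linarith)

theorem frequently_mul_lt_of_ofReal_lt_inv_liminf (u : ℕ → ℕ) {τ : ℝ} (hτ : 0 < τ)
    (h : ENNReal.ofReal τ < 1 / liminf (fun n => (u n : ENNReal) / n) atTop) :
    ∃ᶠ n in atTop, τ * u n < n := by
  rw [one_div, ENNReal.lt_inv_iff_lt_inv] at h
  refine ((frequently_lt_of_liminf_lt (by isBoundedDefault) h).and_eventually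
    (eventually_gt_atTop 0)).mono fun n ⟨hn, hn0⟩ => ?_
  have hτ0 : ENNReal.ofReal τ ≠ 0 := (ENNReal.ofReal_pos.mpr hτ).ne'
  rw [ENNReal.div_lt_iff (Or.inl (Nat.cast_ne_zero.mpr hn0.ne'))
    (Or.inl (ENNReal.natCast_ne_top n)), ← ENNReal.div_eq_inv_mul,
    ENNReal.lt_div_iff_mul_lt (Or.inl hτ0) (Or.inl ENNReal.ofReal_ne_top), mul_comm,
    ← ENNReal.ofReal_natCast, ← ENNReal.ofReal_natCast, ← ENNReal.ofReal_mul hτ.le,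
    ENNReal.ofReal_lt_ofReal_iff (Nat.cast_pos.mpr hn0)] at hn
  exact hn

theorem exponent_ge_one_add_inv_rep (b : ℕ) (hb : 2 ≤ b) (x : ℕ → ℕ)
    (hd : ∀ j, x j < b) (hx : ¬ UltimatelyPeriodic x) :
    1 + 1 / Filter.liminf (fun n : ℕ => (repFn x n : ENNReal) / (n : ENNReal)) Filter.atTop ≤
      irrationalityExponent (∑' j : ℕ, (x j : ℝ) / (b : ℝ) ^ (j + 1)) := by
  set d : ℕ → Fin b := fun j => ⟨x j, hd j⟩
  have hξ : ∑' j : ℕ, (x j : ℝ) / (b : ℝ) ^ (j + 1) = Real.ofDigits d := by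
    simp only [Real.ofDigits, Real.ofDigitsTerm, div_eq_mul_inv]; rfl
  have hd_aperiodic : ¬ UltimatelyPeriodic d := fun hp => hx (hp.comp Fin.val)
  rw [hξ, show repFn x = repFn d from repFn_comp Fin.val_injective d]
  refine le_of_forall_lt_imp_le_of_dense fun c hc => ?_
  rcases le_or_gt c 1 with hc1 | hc1
  · exact hc1.trans (one_le_irrationalityExponent _)
  have hc_ne_top : c - 1 ≠ ⊤ := ENNReal.sub_ne_top hc.ne_top
  set τ := (c - 1).toReal
  have hτ : 0 < τ := ENNReal.toReal_pos (tsub_pos_of_lt hc1).ne' hc_ne_top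
  have hc_eq : c = ENNReal.ofReal (1 + τ) := by
    rw [ENNReal.ofReal_add zero_le_one ENNReal.toReal_nonneg, ENNReal.ofReal_one,
      ENNReal.ofReal_toReal hc_ne_top, add_tsub_cancel_of_le hc1.le]
  have hτ_lt : ENNReal.ofReal τ < 1 / liminf (fun n => (repFn d n : ENNReal) / n) atTop := by
    rw [ENNReal.ofReal_toReal hc_ne_top]
    exact ENNReal.sub_lt_of_lt_add hc1.le (by rwa [add_comm] at hc)
  rw [hc_eq]
  exact ofReal_one_add_le_irrationalityExponent_ofDigits hb hd_aperiodic hτ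
    (frequently_mul_lt_of_ofReal_lt_inv_liminf _ hτ hτ_lt)
end

section
/- Suppose the reduced Rauzy graph G'_n(x) of an infinite, non-ultimately periodic word x is of ∞-shape with special cycle U of edge-length k and non-special cycle V of edge-length ℓ, and multiplicity b ≥ 1, and suppose p(m, x)/m ≤ ρ for all m ≥ n, where ρ < 4/3. Then k + ((2b+1)/3)·ℓ < ρ(n + 1). -/
open Filter

variable {A : Type*}

section Helpers
variable {A : Type*}



lemma sw_len (f : ℕ → A) (j m : ℕ) : (subwordAt f j m).length = m := by
  simp [subwordAt]

lemma sw_getElem (f : ℕ → A) (j m i : ℕ) (h : i < m) :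
    (subwordAt f j m)[i]'(by simp [sw_len, h]) = f (j + i) := by
  simp [subwordAt]

lemma sw_zero (f : ℕ → A) (j : ℕ) : subwordAt f j 0 = [] := by simp [subwordAt]

lemma sw_succ_r (f : ℕ → A) (j m : ℕ) :
    subwordAt f j (m+1) = subwordAt f j m ++ [f (j+m)] := by
  simp [subwordAt, List.range_succ]

lemma sw_succ_l (f : ℕ → A) (j m : ℕ) :
    subwordAt f j (m+1) = f j :: subwordAt f (j+1) m := by
  apply List.ext_getElem (by simp [sw_len])
  intro i h1 h2
  rcases Nat.eq_zero_or_pos i with rfl | hi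
  · have := sw_getElem f j (m+1) 0 (by omega)
    simpa using this
  · obtain ⟨i', rfl⟩ : ∃ i', i = i' + 1 := ⟨i - 1, by omega⟩
    have hm : i' + 1 < m + 1 := by simpa [sw_len] using h1
    rw [sw_getElem f j (m+1) (i'+1) hm]
    simp only [List.getElem_cons_succ]
    rw [sw_getElem f (j+1) m i' (by omega)]
    ring_nf

lemma sw_take (f : ℕ → A) (j m e : ℕ) (h : e ≤ m) :
    (subwordAt f j m).take e = subwordAt f j e := by
  simp [subwordAt, ← List.map_take, List.take_range, Nat.min_eq_left h]

lemma sw_drop (f : ℕ → A) (j m d : ℕ) :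
    (subwordAt f j m).drop d = subwordAt f (j+d) (m-d) := by
  apply List.ext_getElem (by simp [sw_len])
  intro i h1 h2
  have hd : d + i < m := by simp [sw_len] at h1; omega
  rw [List.getElem_drop, sw_getElem f j m (d+i) hd, sw_getElem f (j+d) (m-d) i (by omega)]
  ring_nf

lemma sw_sub {f : ℕ → A} {p L : ℕ} {W : List A} (h : subwordAt f p L = W)
    {d e : ℕ} (hde : d + e ≤ L) : subwordAt f (p+d) e = (W.drop d).take e := by
  rw [← h, sw_drop, sw_take _ _ _ _ (by omega)]

lemma sw_congr {f g : ℕ → A} {p q m : ℕ} (h : subwordAt f p m = subwordAt g q m)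
    {i : ℕ} (hi : i < m) : f (p+i) = g (q+i) := by
  rw [← sw_getElem f p m i hi, ← sw_getElem g q m i hi]
  exact List.getElem_of_eq h _

lemma isFactor_sw (f : ℕ → A) (j m : ℕ) : IsFactor (subwordAt f j m) f :=
  ⟨j, by rw [sw_len]⟩

lemma factor_sub {W : List A} {f : ℕ → A} (h : IsFactor W f) {d e : ℕ}
    (hde : d + e ≤ W.length) : IsFactor ((W.drop d).take e) f := by
  obtain ⟨j, hj⟩ := h
  have := sw_sub hj hde
  rw [← this]; exact isFactor_sw f (j+d) e

lemma factor_drop {W : List A} {f : ℕ → A} (h : IsFactor W f) (d : ℕ) :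
    IsFactor (W.drop d) f := by
  rcases le_or_gt d W.length with hd | hd
  · have := factor_sub h (d := d) (e := W.length - d) (by omega)
    rwa [List.take_of_length_le (by simp)] at this
  · rw [List.drop_eq_nil_of_le (by omega)]
    exact ⟨0, by simp [sw_zero]⟩


lemma sw_shift (x : ℕ → A) (s j m : ℕ) :
    subwordAt (shiftWord x s) j m = subwordAt x (s+j) m := by
  apply List.ext_getElem (by simp [sw_len])
  intro i h1 h2
  rw [sw_getElem _ _ _ _ (by simpa [sw_len] using h1),
      sw_getElem _ _ _ _ (by simpa [sw_len] using h1)]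
  simp [shiftWord, add_assoc]

lemma factor_of_shift {v : List A} {x : ℕ → A} {s : ℕ}
    (h : IsFactor v (shiftWord x s)) : IsFactor v x := by
  obtain ⟨j, hj⟩ := h
  exact ⟨s + j, by rw [← sw_shift]; exact hj⟩

lemma rs_of_two {f : ℕ → A} {p q m : ℕ} {S : List A}
    (hp : subwordAt f p m = S) (hq : subwordAt f q m = S)
    (hne : f (p+m) ≠ f (q+m)) : RightSpecial S f := by
  refine ⟨f (p+m), f (q+m), hne, ⟨p, ?_⟩, ⟨q, ?_⟩⟩
  · have hl : (S ++ [f (p+m)]).length = m + 1 := by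
      simp [← hp, sw_len]
    rw [hl, sw_succ_r, hp]
  · have hl : (S ++ [f (q+m)]).length = m + 1 := by
      simp [← hq, sw_len]
    rw [hl, sw_succ_r, hq]

lemma ls_of_two {f : ℕ → A} {p q m : ℕ} {S : List A}
    (hp : subwordAt f (p+1) m = S) (hq : subwordAt f (q+1) m = S)
    (hne : f p ≠ f q) : LeftSpecial S f := by
  refine ⟨f p, f q, hne, ⟨p, ?_⟩, ⟨q, ?_⟩⟩
  · have hl : (f p :: S).length = m + 1 := by simp [← hp, sw_len]
    rw [hl, sw_succ_l, hp]
  · have hl : (f q :: S).length = m + 1 := by simp [← hq, sw_len]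
    rw [hl, sw_succ_l, hq]

lemma rs_drop {W : List A} {f : ℕ → A} (h : RightSpecial W f) (d : ℕ)
    (hd : d ≤ W.length) : RightSpecial (W.drop d) f := by
  obtain ⟨a, b, hne, ha, hb⟩ := h
  refine ⟨a, b, hne, ?_, ?_⟩
  · have := factor_drop ha d
    rwa [List.drop_append_of_le_length hd] at this
  · have := factor_drop hb d
    rwa [List.drop_append_of_le_length hd] at this

-- pure propagation steps
lemma step_fwd_pure {f g : ℕ → A} {p q m : ℕ}
    (h : subwordAt f p m = subwordAt g q m) (hl : f (p+m) = g (q+m)) :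
    subwordAt f (p+1) m = subwordAt g (q+1) m := by
  have h1 : subwordAt f p (m+1) = subwordAt g q (m+1) := by
    rw [sw_succ_r, sw_succ_r, h, hl]
  rw [sw_succ_l, sw_succ_l] at h1
  exact (List.cons.injEq _ _ _ _).mp h1 |>.2

lemma step_back_pure {f g : ℕ → A} {p q m : ℕ}
    (h : subwordAt f (p+1) m = subwordAt g (q+1) m) (hl : f p = g q) :
    subwordAt f p m = subwordAt g q m := by
  have h1 : subwordAt f p (m+1) = subwordAt g q (m+1) := by
    rw [sw_succ_l, sw_succ_l, h, hl]
  have := congrArg (List.take m) h1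
  rwa [sw_take _ _ _ _ (by omega), sw_take _ _ _ _ (by omega)] at this


lemma factorSet_finite_s15 [Finite A] (x : ℕ → A) (m : ℕ) :
    {w : List A | w.length = m ∧ IsFactor w x}.Finite := by
  have h1 : {w : List A | w.length = m ∧ IsFactor w x} ⊆
      Set.range (fun g : Fin m → A => List.ofFn g) := by
    rintro v ⟨hv, -⟩
    exact ⟨fun i => v.get (Fin.cast hv.symm i), by
      apply List.ext_getElem (by simp [hv]) (by intro i h1 h2; simp [List.get_eq_getElem])⟩
  exact (Set.finite_range _).subset h1

open Classical in
noncomputable def FSet [Finite A] (x : ℕ → A) (m : ℕ) : Finset (List A) :=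
  (factorSet_finite_s15 x m).toFinset

lemma mem_FSet [Finite A] {x : ℕ → A} {m : ℕ} {v : List A} :
    v ∈ FSet x m ↔ v.length = m ∧ IsFactor v x := by
  simp [FSet, Set.Finite.mem_toFinset]

lemma complexity_eq_card [Finite A] (x : ℕ → A) (m : ℕ) :
    complexity x m = (FSet x m).card :=
  Set.ncard_eq_toFinset_card _ _

lemma sw_mem_FSet [Finite A] (x : ℕ → A) (j m : ℕ) : subwordAt x j m ∈ FSet x m :=
  mem_FSet.mpr ⟨sw_len x j m, isFactor_sw x j m⟩

lemma occ_of_mem [Finite A] {x : ℕ → A} {m : ℕ} {v : List A} (h : v ∈ FSet x m) :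
    ∃ j, subwordAt x j m = v := by
  obtain ⟨hl, j, hj⟩ := mem_FSet.mp h
  exact ⟨j, by rwa [hl] at hj⟩

open Classical in
lemma image_take_FSet [Finite A] (x : ℕ → A) (m : ℕ) :
    (FSet x (m+1)).image (List.take m) = FSet x m := by
  apply Finset.ext
  intro v
  constructor
  · intro hv
    obtain ⟨u, hu, rfl⟩ := Finset.mem_image.mp hv
    obtain ⟨j, hj⟩ := occ_of_mem hu
    rw [← hj, sw_take _ _ _ _ (by omega)]
    exact sw_mem_FSet x j m
  · intro hv
    obtain ⟨j, hj⟩ := occ_of_mem hv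
    refine Finset.mem_image.mpr ⟨subwordAt x j (m+1), sw_mem_FSet x j (m+1), ?_⟩
    rw [sw_take _ _ _ _ (by omega), hj]

lemma complexity_zero [Finite A] (x : ℕ → A) : complexity x 0 = 1 := by
  rw [complexity_eq_card]
  have : FSet x 0 = {([] : List A)} := by
    apply Finset.ext
    intro v
    simp only [mem_FSet, Finset.mem_singleton, List.length_eq_zero_iff]
    constructor
    · rintro ⟨rfl, -⟩; rfl
    · rintro rfl; exact ⟨rfl, ⟨0, by simp [sw_zero]⟩⟩
  simp [this]

lemma periodic_of_det {x : ℕ → A} {m i j : ℕ} (hij : i < j)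
    (heq : subwordAt x i m = subwordAt x j m)
    (UE : ∀ p q : ℕ, subwordAt x p m = subwordAt x q m → x (p+m) = x (q+m)) :
    UltimatelyPeriodic x := by
  have key : ∀ t, subwordAt x (i+t) m = subwordAt x (j+t) m := by
    intro t
    induction t with
    | zero => simpa using heq
    | succ t ih =>
      have hl := UE _ _ ih
      have := step_fwd_pure ih hl
      rw [show i + (t+1) = i + t + 1 by omega, show j + (t+1) = j + t + 1 by omega]
      exact this
  have letters : ∀ t, x (i+t) = x (j+t) := by
    intro t
    rcases Nat.eq_zero_or_pos m with rfl | hm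
    · have := UE (i+t) (j+t) (by rw [sw_zero, sw_zero])
      simpa using this
    · have := sw_congr (key t) (i := 0) (by omega)
      simpa using this
  refine ⟨i, j - i, by omega, fun q hq => ?_⟩
  have h1 := letters (q - i)
  rw [show i + (q - i) = q by omega] at h1
  rw [show q + (j - i) = j + (q - i) by omega]
  exact h1.symm

lemma complexity_lt [Finite A] {x : ℕ → A} (hx : ¬ UltimatelyPeriodic x) (m : ℕ) :
    complexity x m < complexity x (m+1) := by
  classical
  rw [complexity_eq_card, complexity_eq_card]
  rcases lt_or_ge (FSet x m).card (FSet x (m+1)).card with h | h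
  · exact h
  exfalso
  have himg := image_take_FSet x m
  have hcard : ((FSet x (m+1)).image (List.take m)).card = (FSet x (m+1)).card := by
    have h1 : ((FSet x (m+1)).image (List.take m)).card ≤ (FSet x (m+1)).card :=
      Finset.card_image_le
    have h2 : ((FSet x (m+1)).image (List.take m)).card = (FSet x m).card := by rw [himg]
    omega
  have hinj : Set.InjOn (List.take m) (FSet x (m+1) : Set (List A)) :=
    Finset.card_image_iff.mp hcard
  have UE : ∀ p q : ℕ, subwordAt x p m = subwordAt x q m → x (p+m) = x (q+m) := by
    intro p q hpq
    have h1 : (subwordAt x p (m+1)).take m = (subwordAt x q (m+1)).take m := by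
      rw [sw_take _ _ _ _ (by omega), sw_take _ _ _ _ (by omega), hpq]
    have := hinj (sw_mem_FSet x p (m+1)) (sw_mem_FSet x q (m+1)) h1
    exact sw_congr this (i := m) (by omega)
  obtain ⟨i, j, hij, heq⟩ :=
    Finite.exists_ne_map_eq_of_infinite
      (fun j : ℕ => (⟨subwordAt x j m, sw_mem_FSet x j m⟩ : {v // v ∈ FSet x m}))
  have heq' : subwordAt x i m = subwordAt x j m := by
    simpa using congrArg Subtype.val heq
  rcases hij.lt_or_gt with hlt | hlt
  · exact hx (periodic_of_det hlt heq' UE)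
  · exact hx (periodic_of_det hlt heq'.symm UE)

lemma complexity_MH [Finite A] {x : ℕ → A} (hx : ¬ UltimatelyPeriodic x) (m : ℕ) :
    m + 1 ≤ complexity x m := by
  induction m with
  | zero => simp [complexity_zero]
  | succ m ih => have := complexity_lt hx m; omega

lemma complexity_steps [Finite A] {x : ℕ → A} (hx : ¬ UltimatelyPeriodic x) (a t : ℕ) :
    complexity x a + t ≤ complexity x (a + t) := by
  induction t with
  | zero => simp
  | succ t ih =>
    have h1 := complexity_lt hx (a + t)
    rw [show a + (t+1) = (a + t) + 1 by omega]
    omega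

lemma complexity_double [Finite A] {x : ℕ → A} {m : ℕ} {W1 W2 : List A}
    (h1 : W1.length = m) (h2 : W2.length = m) (hne : W1 ≠ W2)
    (hrs1 : RightSpecial W1 x) (hrs2 : RightSpecial W2 x) :
    complexity x m + 2 ≤ complexity x (m+1) := by
  classical
  obtain ⟨a1, b1, hab1, ha1, hb1⟩ := hrs1
  obtain ⟨a2, b2, hab2, ha2, hb2⟩ := hrs2
  rw [complexity_eq_card, complexity_eq_card]
  have takeW : ∀ (W : List A) (c : A), W.length = m → (W ++ [c]).take m = W := by
    intro W c hW
    rw [List.take_append_of_le_length (by omega), List.take_of_length_le (by omega)]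
  have hmem1 : W1 ++ [a1] ∈ FSet x (m+1) := mem_FSet.mpr ⟨by simp [h1], ha1⟩
  have hmem2 : W2 ++ [a2] ∈ FSet x (m+1) := mem_FSet.mpr ⟨by simp [h2], ha2⟩
  have hne12 : W1 ++ [a1] ≠ W2 ++ [a2] := by
    intro h; apply hne
    rw [← takeW W1 a1 h1, ← takeW W2 a2 h2, h]
  have hsub : FSet x m ⊆
      (((FSet x (m+1)).erase (W1 ++ [a1])).erase (W2 ++ [a2])).image (List.take m) := by
    intro v hv
    rcases eq_or_ne v W1 with rfl | hv1
    · refine Finset.mem_image.mpr ⟨v ++ [b1], ?_, takeW v b1 h1⟩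
      refine Finset.mem_erase.mpr ⟨?_, Finset.mem_erase.mpr ⟨?_, ?_⟩⟩
      · intro h; apply hne
        rw [← takeW v b1 h1, h, takeW W2 a2 h2]
      · intro h
        exact hab1 ((List.cons.injEq _ _ _ _).mp (List.append_cancel_left h) |>.1.symm)
      · exact mem_FSet.mpr ⟨by simp [h1], hb1⟩
    rcases eq_or_ne v W2 with rfl | hv2
    · refine Finset.mem_image.mpr ⟨v ++ [b2], ?_, takeW v b2 h2⟩
      refine Finset.mem_erase.mpr ⟨?_, Finset.mem_erase.mpr ⟨?_, ?_⟩⟩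
      · intro h
        exact hab2 ((List.cons.injEq _ _ _ _).mp (List.append_cancel_left h) |>.1.symm)
      · intro h; apply hne
        rw [← takeW v b2 h2, h, takeW W1 a1 h1]
      · exact mem_FSet.mpr ⟨by simp [h2], hb2⟩
    · obtain ⟨j, hj⟩ := occ_of_mem hv
      refine Finset.mem_image.mpr ⟨subwordAt x j (m+1), ?_, ?_⟩
      · refine Finset.mem_erase.mpr ⟨?_, Finset.mem_erase.mpr ⟨?_, ?_⟩⟩
        · intro h; apply hv2; rw [← hj, ← sw_take x j (m+1) m (by omega), h, takeW W2 a2 h2]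
        · intro h; apply hv1; rw [← hj, ← sw_take x j (m+1) m (by omega), h, takeW W1 a1 h1]
        · exact sw_mem_FSet x j (m+1)
      · rw [sw_take _ _ _ _ (by omega), hj]
  have hc1 : (FSet x m).card ≤ ((((FSet x (m+1)).erase (W1 ++ [a1])).erase (W2 ++ [a2]))).card :=
    le_trans (Finset.card_le_card hsub) Finset.card_image_le
  have hmem2' : W2 ++ [a2] ∈ (FSet x (m+1)).erase (W1 ++ [a1]) :=
    Finset.mem_erase.mpr ⟨fun h => hne12 h.symm, hmem2⟩
  have hc2 := Finset.card_erase_of_mem hmem2'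
  have hc3 := Finset.card_erase_of_mem hmem1
  have hpos1 : 1 ≤ (FSet x (m+1)).card := Finset.card_pos.mpr ⟨W1 ++ [a1], hmem1⟩
  have hpos2 : 1 ≤ ((FSet x (m+1)).erase (W1 ++ [a1])).card := Finset.card_pos.mpr ⟨_, hmem2'⟩
  omega

def glueW (w V' : List A) (j : ℕ) : List A := w ++ (List.replicate j V').flatten

lemma gl_len (w V' : List A) (j : ℕ) :
    (glueW w V' j).length = w.length + j * V'.length := by
  simp [glueW, List.length_flatten, List.map_replicate, mul_comm]

lemma gl_zero (w V' : List A) : glueW w V' 0 = w := by simp [glueW]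

lemma gl_one (w V' : List A) : glueW w V' 1 = w ++ V' := by simp [glueW]

lemma gl_succ (w V' : List A) (j : ℕ) :
    glueW w V' (j+1) = glueW w V' j ++ V' := by
  simp [glueW, List.replicate_succ']

lemma gl_succ' (w V' : List A) (j : ℕ) :
    glueW w V' (j+1) = (w ++ V') ++ (List.replicate j V').flatten := by
  simp [glueW, List.replicate_succ]

lemma gl_prefix (w V' : List A) {j b' : ℕ} (h : j ≤ b') :
    glueW w V' j <+: glueW w V' b' := by
  induction b' with
  | zero =>
    have hj : j = 0 := by omega
    subst hj; exact List.prefix_refl _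
  | succ b' ih =>
    rcases eq_or_lt_of_le h with rfl | hlt
    · exact List.prefix_refl _
    · exact (ih (by omega)).trans (by rw [gl_succ]; exact List.prefix_append _ _)

lemma gl_take (w V' : List A) {j b' : ℕ} (h : j ≤ b') :
    (glueW w V' b').take (w.length + j * V'.length) = glueW w V' j := by
  have := List.prefix_iff_eq_take.mp (gl_prefix w V' h)
  rw [← gl_len]; exact this.symm

lemma gl_drop1 {w V' Vf : List A} {d : ℕ} (hwV : w ++ V' = Vf)
    (hVd : Vf.drop d = w) (hdle : d ≤ Vf.length) (j : ℕ) :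
    (glueW w V' (j+1)).drop d = glueW w V' j := by
  rw [gl_succ', hwV, List.drop_append_of_le_length hdle, hVd, glueW]

lemma gl_drop_mul {w V' Vf : List A} {d : ℕ} (hwV : w ++ V' = Vf)
    (hVd : Vf.drop d = w) (hdle : d ≤ Vf.length) {b' : ℕ} :
    ∀ t, t ≤ b' → (glueW w V' b').drop (t * d) = glueW w V' (b' - t) := by
  intro t
  induction t with
  | zero => intro _; simp
  | succ t ih =>
    intro ht
    have h1 : (t+1) * d = t * d + d := by ring
    rw [h1, ← List.drop_drop, ih (by omega)]
    have h2 : b' - t = (b' - (t+1)) + 1 := by omega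
    rw [h2, gl_drop1 hwV hVd hdle]

lemma propR {y : ℕ → A} {n : ℕ} {w : List A}
    (hstep : ∀ p q, subwordAt y p n ≠ w → subwordAt y p n = subwordAt y q n →
      subwordAt y (p+1) n = subwordAt y (q+1) n)
    {p q : ℕ} (h0 : subwordAt y p n = subwordAt y q n) {t : ℕ}
    (hw : ∀ r, r < t → subwordAt y (p+r) n ≠ w) :
    ∀ s, s ≤ t → subwordAt y (p+s) n = subwordAt y (q+s) n := by
  intro s
  induction s with
  | zero => intro _; simpa using h0
  | succ s ih =>
    intro hs
    have e := ih (by omega)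
    have := hstep (p+s) (q+s) (hw s (by omega)) e
    rw [show p+(s+1) = p+s+1 by omega, show q+(s+1) = q+s+1 by omega]
    exact this

lemma propL {y : ℕ → A} {n : ℕ} {w : List A}
    (hstep : ∀ p q, subwordAt y (p+1) n ≠ w → subwordAt y (p+1) n = subwordAt y (q+1) n →
      subwordAt y p n = subwordAt y q n)
    {p q s : ℕ} (hs : subwordAt y (p+s) n = subwordAt y (q+s) n)
    (hw : ∀ r, 0 < r → r ≤ s → subwordAt y (p+r) n ≠ w) :
    ∀ r, r ≤ s → subwordAt y (p+r) n = subwordAt y (q+r) n := by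
  have aux : ∀ d r, r + d = s → subwordAt y (p+r) n = subwordAt y (q+r) n := by
    intro d
    induction d with
    | zero =>
      intro r h
      rw [show r = s by omega]
      exact hs
    | succ d ih =>
      intro r h
      have h1 := ih (r+1) (by omega)
      rw [show p+(r+1) = p+r+1 by omega, show q+(r+1) = q+r+1 by omega] at h1
      exact hstep (p+r) (q+r) (by rw [show p+r+1 = p+(r+1) by omega]; exact hw (r+1) (by omega) (by omega)) h1
  exact fun r hr => aux (s - r) r (by omega)

end Helpers

theorem reduced_cycle_bound {A : Type*} [Fintype A] (x : ℕ → A)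
    (n k ℓ b : ℕ) (w U V : List A) (ρ : ℝ)
    (hx : ¬ UltimatelyPeriodic x)
    (hshape : InftyShape (ztail x (n + 1)) n w U V)
    (hEss : EssentialRightSpecial U x)
    (hU : U.length = n + k) (hV : V.length = n + ℓ)
    (hb : 1 ≤ b) (hmult : IsFactor (cyclePow n U V b) x)
    (hρ : ρ < 4 / 3)
    (hcomp : ∀ m : ℕ, n ≤ m → (complexity x m : ℝ) / (m : ℝ) ≤ ρ) :
    (k : ℝ) + (2 * (b : ℝ) + 1) / 3 * (ℓ : ℝ) < ρ * ((n : ℝ) + 1) := by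
  classical
  obtain ⟨hwlen, hLSw, hRSw, hspec, hcycU, hcycV, hUV, hUint, hVint, hcover⟩ := hshape
  set y := ztail x (n+1) with hy
  obtain ⟨hUlen', hUtake, hUdrop, hUfac⟩ := hcycU
  obtain ⟨hVlen', hVtake, hVdrop, hVfac⟩ := hcycV
  have hk1 : 1 ≤ k := by omega
  have hl1 : 1 ≤ ℓ := by omega
  have hUdropk : U.drop k = w := by rw [← hUdrop]; congr 1; omega
  have hVdropl : V.drop ℓ = w := by rw [← hVdrop]; congr 1; omega
  obtain ⟨pU, hpU0⟩ := hUfac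
  have hpU : subwordAt y pU (n+k) = U := by rwa [hU] at hpU0
  obtain ⟨pV, hpV0⟩ := hVfac
  have hpV : subwordAt y pV (n+ℓ) = V := by rwa [hV] at hpV0
  have hwtake : w.take n = w := List.take_of_length_le (le_of_eq hwlen)
  -- window facts
  have hu0w : subwordAt y pU n = w := by
    have h1 := sw_sub hpU (d := 0) (e := n) (by omega)
    rw [add_zero] at h1
    rw [h1, List.drop_zero, hUtake]
  have hukw : subwordAt y (pU+k) n = w := by
    have h1 := sw_sub hpU (d := k) (e := n) (by omega)
    rw [h1, hUdropk, hwtake]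
  have hui : ∀ i, 0 < i → i < k → subwordAt y (pU+i) n ≠ w := by
    intro i h1 h2
    rw [sw_sub hpU (d := i) (e := n) (by omega)]
    exact hUint i h1 (by rw [hU]; omega)
  have hv0w : subwordAt y pV n = w := by
    have h1 := sw_sub hpV (d := 0) (e := n) (by omega)
    rw [add_zero] at h1
    rw [h1, List.drop_zero, hVtake]
  have hvkw : subwordAt y (pV+ℓ) n = w := by
    have h1 := sw_sub hpV (d := ℓ) (e := n) (by omega)
    rw [h1, hVdropl, hwtake]
  have hvj : ∀ j, 0 < j → j < ℓ → subwordAt y (pV+j) n ≠ w := by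
    intro j h1 h2
    rw [sw_sub hpV (d := j) (e := n) (by omega)]
    exact hVint j h1 (by rw [hV]; omega)
  have yfac : ∀ v : List A, IsFactor v y → IsFactor v x := by
    intro v hf
    rw [hy] at hf
    unfold ztail at hf
    exact factor_of_shift hf
  -- propagation steps
  have stepR : ∀ p q, subwordAt y p n ≠ w → subwordAt y p n = subwordAt y q n →
      subwordAt y (p+1) n = subwordAt y (q+1) n := by
    intro p q hne he
    by_cases hl : y (p+n) = y (q+n)
    · exact step_fwd_pure he hl
    · exact absurd (hspec _ (sw_len y p n) (isFactor_sw y p n)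
        (Or.inr (rs_of_two rfl he.symm hl))) hne
  have stepL : ∀ p q, subwordAt y (p+1) n ≠ w → subwordAt y (p+1) n = subwordAt y (q+1) n →
      subwordAt y p n = subwordAt y q n := by
    intro p q hne he
    by_cases hl : y p = y q
    · exact step_back_pure he hl
    · exact absurd (hspec _ (sw_len y (p+1) n) (isFactor_sw y (p+1) n)
        (Or.inl (ls_of_two rfl he.symm hl))) hne
  -- U = V derivation
  have UeqV : 1 ≤ n → (∀ s, s ≤ k → subwordAt y (pU+s) n = subwordAt y (pV+s) n) →
      k = ℓ → False := by
    intro hn1 hall hkl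
    apply hUV
    have hYE : subwordAt y pU (n+k) = subwordAt y pV (n+k) := by
      apply List.ext_getElem (by simp [sw_len])
      intro r h1 h2
      have hr : r < n + k := by simpa [sw_len] using h1
      rw [sw_getElem _ _ _ _ hr, sw_getElem _ _ _ _ hr]
      rcases Nat.lt_or_ge r n with hrn | hrn
      · have h3 := sw_congr (hall 0 (by omega)) (i := r) hrn
        simpa using h3
      · have hs : r - n + 1 ≤ k := by omega
        have h3 := sw_congr (hall (r-n+1) hs) (i := n-1) (by omega)
        rw [show pU+(r-n+1)+(n-1) = pU + r by omega,
            show pV+(r-n+1)+(n-1) = pV + r by omega] at h3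
        exact h3
    rw [hpU, show n+k = n+ℓ by omega, hpV] at hYE
    exact hYE
  -- distinctness lemmas
  have KEY_uv : ∀ i j, 0 < i → i < k → 0 < j → j < ℓ →
      subwordAt y (pU+i) n = subwordAt y (pV+j) n → False := by
    intro i j hi hik hj hjl he
    have hn1 : 1 ≤ n := by
      by_contra hn
      have hn0 : n = 0 := by omega
      apply hui i hi hik
      rw [hn0, sw_zero]
      exact (List.length_eq_zero_iff.mp (by rw [hwlen, hn0])).symm
    rcases lt_trichotomy (k - i) (ℓ - j) with hlt | heq' | hgt
    · have hall := propR stepR he (t := k-i) (fun r hr => by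
        rw [show pU+i+r = pU+(i+r) by omega]
        exact hui (i+r) (by omega) (by omega))
      have hend := hall (k-i) le_rfl
      rw [show pU+i+(k-i) = pU+k by omega, hukw,
          show pV+j+(k-i) = pV+(j+(k-i)) by omega] at hend
      exact hvj (j+(k-i)) (by omega) (by omega) hend.symm
    · rcases lt_trichotomy i j with hij | hij | hij
      · have hall := propL stepL (p := pU) (q := pV + (j-i)) (s := i)
          (by rw [show pV+(j-i)+i = pV+j by omega]; exact he)
          (fun r h0 hri => hui r h0 (by omega))
        have h0 := hall 0 (by omega)
        rw [add_zero, add_zero, hu0w] at h0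
        exact hvj (j-i) (by omega) (by omega) h0.symm
      · subst hij
        have hkl : k = ℓ := by omega
        apply UeqV hn1 ?_ hkl
        intro s hs
        rcases le_or_gt s i with hsle | hslt
        · have hall := propL stepL (p := pU) (q := pV) (s := i) he
            (fun r h0 hri => hui r h0 (by omega))
          exact hall s hsle
        · have hall := propR stepR he (t := k - i) (fun r hr => by
            rw [show pU+i+r = pU+(i+r) by omega]
            exact hui (i+r) (by omega) (by omega))
          have h3 := hall (s - i) (by omega)
          rw [show pU+i+(s-i) = pU+s by omega, show pV+i+(s-i) = pV+s by omega] at h3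
          exact h3
      · have hall := propL stepL (p := pU + (i-j)) (q := pV) (s := j)
          (by rw [show pU+(i-j)+j = pU+i by omega]; exact he)
          (fun r h0 hrj => by
            rw [show pU+(i-j)+r = pU+(i-j+r) by omega]
            exact hui (i-j+r) (by omega) (by omega))
        have h0 := hall 0 (by omega)
        rw [add_zero, add_zero, hv0w] at h0
        exact hui (i-j) (by omega) (by omega) h0
    · have hall := propR stepR he (t := ℓ-j) (fun r hr => by
        rw [show pU+i+r = pU+(i+r) by omega]
        exact hui (i+r) (by omega) (by omega))
      have hend := hall (ℓ-j) le_rfl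
      rw [show pV+j+(ℓ-j) = pV+ℓ by omega, hvkw,
          show pU+i+(ℓ-j) = pU+(i+(ℓ-j)) by omega] at hend
      exact hui (i+(ℓ-j)) (by omega) (by omega) hend
  have KEY_uu : ∀ i j, 0 < i → i < j → j < k →
      subwordAt y (pU+i) n = subwordAt y (pU+j) n → False := by
    intro i j hi hij hjk he
    have hall := propR stepR he (t := k-j) (fun r hr => by
      rw [show pU+i+r = pU+(i+r) by omega]
      exact hui (i+r) (by omega) (by omega))
    have hend := hall (k-j) le_rfl
    rw [show pU+j+(k-j) = pU+k by omega, hukw,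
        show pU+i+(k-j) = pU+(i+(k-j)) by omega] at hend
    exact hui (i+(k-j)) (by omega) (by omega) hend
  have KEY_vv : ∀ i j, 0 < i → i < j → j < ℓ →
      subwordAt y (pV+i) n = subwordAt y (pV+j) n → False := by
    intro i j hi hij hjl he
    have stepRV : ∀ p q, subwordAt y p n ≠ w → subwordAt y p n = subwordAt y q n →
        subwordAt y (p+1) n = subwordAt y (q+1) n := stepR
    have hall := propR stepRV he (t := ℓ-j) (fun r hr => by
      rw [show pV+i+r = pV+(i+r) by omega]
      exact hvj (i+r) (by omega) (by omega))
    have hend := hall (ℓ-j) le_rfl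
    rw [show pV+j+(ℓ-j) = pV+ℓ by omega, hvkw,
        show pV+i+(ℓ-j) = pV+(i+(ℓ-j)) by omega] at hend
    exact hvj (i+(ℓ-j)) (by omega) (by omega) hend
  -- first letters after w differ along U and V
  have KEY3 : y (pU+n) ≠ y (pV+n) := by
    intro haa
    have h1 : subwordAt y (pU+1) n = subwordAt y (pV+1) n :=
      step_fwd_pure (hu0w.trans hv0w.symm) haa
    rcases Nat.lt_or_ge 1 k with hk2 | hk1'
    · rcases Nat.lt_or_ge 1 ℓ with hl2 | hl1'
      · exact KEY_uv 1 1 one_pos hk2 one_pos hl2 h1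
      · have hl1'' : ℓ = 1 := by omega
        apply hui 1 one_pos hk2
        rw [hl1''] at hvkw
        exact h1.trans hvkw
    · have hk1'' : k = 1 := by omega
      rcases Nat.lt_or_ge 1 ℓ with hl2 | hl1'
      · apply hvj 1 one_pos hl2
        rw [hk1''] at hukw
        exact h1.symm.trans hukw
      · have hl1'' : ℓ = 1 := by omega
        apply hUV
        have hU1 : U = w ++ [y (pU+n)] := by
          have h2 := hpU
          rw [hk1''] at h2
          rw [← h2, sw_succ_r, hu0w]
        have hV1 : V = w ++ [y (pV+n)] := by
          have h2 := hpV
          rw [hl1''] at h2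
          rw [← h2, sw_succ_r, hv0w]
        rw [hU1, hV1, haa]
  -- last letters before final w differ along U and V
  have KEYc : y (pU+(k-1)) ≠ y (pV+(ℓ-1)) := by
    intro hcc
    have h1 : subwordAt y (pU+(k-1)) n = subwordAt y (pV+(ℓ-1)) n := by
      apply step_back_pure (p := pU+(k-1)) (q := pV+(ℓ-1)) ?_ hcc
      rw [show pU+(k-1)+1 = pU+k by omega, show pV+(ℓ-1)+1 = pV+ℓ by omega, hukw, hvkw]
    rcases Nat.lt_or_ge 1 k with hk2 | hk1'
    · rcases Nat.lt_or_ge 1 ℓ with hl2 | hl1'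
      · exact KEY_uv (k-1) (ℓ-1) (by omega) (by omega) (by omega) (by omega) h1
      · have hl1'' : ℓ = 1 := by omega
        apply hui (k-1) (by omega) (by omega)
        rw [show ℓ - 1 = 0 by omega, add_zero, hv0w] at h1
        exact h1
    · have hk1'' : k = 1 := by omega
      rcases Nat.lt_or_ge 1 ℓ with hl2 | hl1'
      · apply hvj (ℓ-1) (by omega) (by omega)
        rw [show k - 1 = 0 by omega, add_zero, hu0w] at h1
        exact h1.symm
      · have hl1'' : ℓ = 1 := by omega
        apply hUV
        have hU1 : U = y pU :: w := by
          have h2 := hpU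
          rw [hk1''] at h2
          rw [← h2, sw_succ_l, show pU+1 = pU+k by omega, hukw]
        have hV1 : V = y pV :: w := by
          have h2 := hpV
          rw [hl1''] at h2
          rw [← h2, sw_succ_l, show pV+1 = pV+ℓ by omega, hvkw]
        rw [hU1, hV1]
        rw [show k - 1 = 0 by omega, show ℓ - 1 = 0 by omega, add_zero, add_zero] at hcc
        rw [hcc]
  -- vertex count: complexity x n ≥ k + ℓ - 1
  have F3 : k + ℓ ≤ complexity x n + 1 := by
    set T : Finset (List A) :=
      ((Finset.range k).image fun i => subwordAt y (pU+i) n) ∪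
      ((Finset.Ioo 0 ℓ).image fun j => subwordAt y (pV+j) n) with hT
    have hinj1 : Set.InjOn (fun i => subwordAt y (pU+i) n) ↑(Finset.range k) := by
      intro i1 hi1 i2 hi2 he
      simp only [Finset.coe_range, Set.mem_Iio] at hi1 hi2
      dsimp only at he
      by_contra hne
      rcases Nat.lt_or_ge i1 i2 with hlt | hge
      · rcases Nat.eq_zero_or_pos i1 with rfl | hp
        · rw [add_zero, hu0w] at he
          exact hui i2 (by omega) hi2 he.symm
        · exact KEY_uu i1 i2 hp hlt hi2 he
      · have hlt : i2 < i1 := by omega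
        rcases Nat.eq_zero_or_pos i2 with rfl | hp
        · rw [add_zero, hu0w] at he
          exact hui i1 (by omega) hi1 he
        · exact KEY_uu i2 i1 hp hlt hi1 he.symm
    have hinj2 : Set.InjOn (fun j => subwordAt y (pV+j) n) ↑(Finset.Ioo 0 ℓ) := by
      intro j1 hj1 j2 hj2 he
      simp only [Finset.coe_Ioo, Set.mem_Ioo] at hj1 hj2
      dsimp only at he
      by_contra hne
      rcases Nat.lt_or_ge j1 j2 with hlt | hge
      · exact KEY_vv j1 j2 hj1.1 hlt hj2.2 he
      · exact KEY_vv j2 j1 hj2.1 (by omega) hj1.2 he.symm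
    have hdisj : Disjoint ((Finset.range k).image fun i => subwordAt y (pU+i) n)
        ((Finset.Ioo 0 ℓ).image fun j => subwordAt y (pV+j) n) := by
      rw [Finset.disjoint_left]
      intro a ha hb
      obtain ⟨i, hi, rfl⟩ := Finset.mem_image.mp ha
      obtain ⟨j, hj, he⟩ := Finset.mem_image.mp hb
      simp only [Finset.mem_range] at hi
      simp only [Finset.mem_Ioo] at hj
      rcases Nat.eq_zero_or_pos i with rfl | hp
      · rw [add_zero, hu0w] at he
        exact hvj j hj.1 hj.2 he
      · exact KEY_uv i j hp hi hj.1 hj.2 he.symm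
    have hcardT : T.card = k + (ℓ - 1) := by
      rw [hT, Finset.card_union_of_disjoint hdisj,
          Finset.card_image_of_injOn hinj1, Finset.card_image_of_injOn hinj2,
          Finset.card_range, Nat.card_Ioo]
      omega
    have hsubT : T ⊆ FSet x n := by
      intro v hv
      rw [hT] at hv
      rcases Finset.mem_union.mp hv with h | h
      · obtain ⟨i, _, rfl⟩ := Finset.mem_image.mp h
        exact mem_FSet.mpr ⟨sw_len _ _ _, yfac _ (isFactor_sw _ _ _)⟩
      · obtain ⟨j, _, rfl⟩ := Finset.mem_image.mp h
        exact mem_FSet.mpr ⟨sw_len _ _ _, yfac _ (isFactor_sw _ _ _)⟩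
    have := Finset.card_le_card hsubT
    rw [hcardT, ← complexity_eq_card] at this
    omega
  -- occurrence structure of the factor U V^b U in x
  obtain ⟨c, hc0⟩ := hmult
  have hV'len : (V.drop n).length = ℓ := by rw [List.length_drop, hV]; omega
  have hVfull : w ++ V.drop n = V := by rw [← hVtake]; exact List.take_append_drop n V
  have hUfull : w ++ U.drop n = U := by rw [← hUtake]; exact List.take_append_drop n U
  have hUsplit : U = U.take k ++ w := by rw [← hUdropk]; exact (List.take_append_drop k U).symm
  have hgl_len : ∀ j, (glueW w (V.drop n) j).length = n + j*ℓ := by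
    intro j; rw [gl_len, hwlen, hV'len]
  have hflat : ((List.replicate b (V.drop n)).flatten).length = b * ℓ := by
    simp [List.length_flatten, List.map_replicate, List.sum_replicate, hV'len, smul_eq_mul]
  have hClen : (cyclePow n U V b).length = (n+k) + b*ℓ + k := by
    simp only [cyclePow, List.length_append, hflat, hU, List.length_drop]
    omega
  have hxC : subwordAt x c ((n+k) + b*ℓ + k) = cyclePow n U V b := by
    rw [← hClen]; exact hc0
  have hCalt : cyclePow n U V b = U.take k ++ (glueW w (V.drop n) b ++ U.drop n) := by
    unfold cyclePow glueW
    nth_rewrite 1 [hUsplit]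
    simp [List.append_assoc]
  have hlen_takek : (U.take k).length = k := by rw [List.length_take, hU]; omega
  have hldV : ℓ ≤ V.length := by omega
  have A1 : subwordAt x c (n+k) = U := by
    have h1 := sw_sub hxC (d := 0) (e := n+k) (by omega)
    rw [add_zero, List.drop_zero] at h1
    rw [show cyclePow n U V b = U ++ ((List.replicate b (V.drop n)).flatten ++ U.drop n) by
      simp [cyclePow, List.append_assoc], List.take_left' hU] at h1
    exact h1
  have G0 : subwordAt x (c + k) (n + b*ℓ) = glueW w (V.drop n) b := by
    have h1 := sw_sub hxC (d := k) (e := n + b*ℓ) (by omega)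
    rw [hCalt, List.drop_left' hlen_takek, List.take_left' (hgl_len b)] at h1
    exact h1
  have A3 : subwordAt x (c + (k + b*ℓ)) (n+k) = U := by
    have h1 := sw_sub hxC (d := k + b*ℓ) (e := n+k) (by omega)
    rw [hCalt] at h1
    rw [show (U.take k ++ (glueW w (V.drop n) b ++ U.drop n)).drop (k + b*ℓ)
        = ((U.take k ++ (glueW w (V.drop n) b ++ U.drop n)).drop k).drop (b*ℓ) by
      rw [List.drop_drop]] at h1
    rw [List.drop_left' hlen_takek,
        List.drop_append_of_le_length (by rw [hgl_len b]; omega)] at h1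
    rw [show (glueW w (V.drop n) b).drop (b*ℓ) = w by
      have h2 := gl_drop_mul hVfull hVdropl hldV (b' := b) b le_rfl
      rw [Nat.sub_self, gl_zero] at h2
      exact h2] at h1
    rw [hUfull] at h1
    rw [List.take_of_length_le (le_of_eq hU)] at h1
    exact h1
  have Gocc : ∀ j, j ≤ b → subwordAt x (c + k + (b-j)*ℓ) (n + j*ℓ) = glueW w (V.drop n) j := by
    intro j hj
    have hjb : (b-j)*ℓ + j*ℓ = b*ℓ := by rw [← Nat.add_mul, Nat.sub_add_cancel hj]
    have h1 := sw_sub G0 (d := (b-j)*ℓ) (e := n + j*ℓ) (by omega)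
    rw [gl_drop_mul hVfull hVdropl hldV (b' := b) (b-j) (by omega),
        show b - (b-j) = j by omega,
        List.take_of_length_le (le_of_eq (hgl_len j))] at h1
    exact h1
  have hVocc : subwordAt x (c + k + (b-1)*ℓ) (n + ℓ) = V := by
    have h1 := Gocc 1 hb
    rw [gl_one, hVfull, one_mul] at h1
    exact h1
  -- x-side letters
  have xa : x (c + (k + b*ℓ) + n) = y (pU + n) := sw_congr (A3.trans hpU.symm) (i := n) (by omega)
  have xa' : x (c + k + (b-1)*ℓ + n) = y (pV + n) :=
    sw_congr (hVocc.trans hpV.symm) (i := n) (by omega)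
  have xcV : x (c + k + (b-1)*ℓ + (ℓ-1)) = y (pV + (ℓ-1)) :=
    sw_congr (hVocc.trans hpV.symm) (i := ℓ-1) (by omega)
  have xw3 : subwordAt x (c + (k + b*ℓ)) n = w := by
    have h1 := sw_sub A3 (d := 0) (e := n) (by omega)
    rw [add_zero, List.drop_zero] at h1
    rw [h1, hUtake]
  -- shared suffix fact for the essential right-special family
  have hUdk : U.drop (k-1) = y (pU+(k-1)) :: w := by
    have h1 := sw_sub hpU (d := k-1) (e := n+1) (by omega)
    rw [List.take_of_length_le (by rw [List.length_drop, hU]; omega)] at h1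
    rw [← h1, sw_succ_l, show pU + (k-1) + 1 = pU + k by omega, hukw]
  -- two right-special words at every length in (n, n + (b-1)ℓ]
  have F4 : ∀ m, n < m → m ≤ n + (b-1)*ℓ → complexity x m + 2 ≤ complexity x (m+1) := by
    intro m hm1 hm2
    have hbl : (b-1)*ℓ + ℓ = b*ℓ := by
      cases b with
      | zero => omega
      | succ b' => simp [Nat.succ_sub_one, Nat.succ_mul]
    have h2b : 2 ≤ b := by
      rcases Nat.lt_or_ge b 2 with h | h
      · have hb1 : b = 1 := by omega
        rw [hb1] at hm2
        simp at hm2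
        omega
      · exact h
    have hGb1a : subwordAt x (c + k + ℓ) (n + (b-1)*ℓ) = glueW w (V.drop n) (b-1) := by
      have h1 := Gocc (b-1) (by omega)
      rw [show b-(b-1) = 1 by omega, one_mul] at h1
      exact h1
    have hGb1b : subwordAt x (c + k) (n + (b-1)*ℓ) = glueW w (V.drop n) (b-1) := by
      have h1 := sw_sub G0 (d := 0) (e := n+(b-1)*ℓ) (by omega)
      rw [add_zero, List.drop_zero] at h1
      have h2 := gl_take w (V.drop n) (show b-1 ≤ b by omega)
      rw [hwlen, hV'len] at h2
      rw [h2] at h1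
      exact h1
    have hS1 := sw_sub hGb1a (d := (n+(b-1)*ℓ) - m) (e := m) (by omega)
    have hS2 := sw_sub hGb1b (d := (n+(b-1)*ℓ) - m) (e := m) (by omega)
    have hSS : subwordAt x (c + k + ((n+(b-1)*ℓ) - m)) m
        = subwordAt x (c + k + ℓ + ((n+(b-1)*ℓ) - m)) m := hS2.trans hS1.symm
    have hx1 : x ((c + k + ℓ + ((n+(b-1)*ℓ) - m)) + m) = y (pU + n) := by
      rw [show (c + k + ℓ + ((n+(b-1)*ℓ) - m)) + m = c + (k + b*ℓ) + n by omega]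
      exact xa
    have hx2 : x ((c + k + ((n+(b-1)*ℓ) - m)) + m) = y (pV + n) := by
      rw [show (c + k + ((n+(b-1)*ℓ) - m)) + m = c + k + (b-1)*ℓ + n by omega]
      exact xa'
    have hSrs : RightSpecial (subwordAt x (c + k + ℓ + ((n+(b-1)*ℓ) - m)) m) x := by
      apply rs_of_two rfl hSS
      rw [hx1, hx2]
      exact fun h => KEY3 (h.trans rfl)
    have hSsuf : (subwordAt x (c + k + ℓ + ((n+(b-1)*ℓ) - m)) m).drop (m-(n+1))
        = y (pV+(ℓ-1)) :: w := by
      rw [sw_drop, show m - (m-(n+1)) = n+1 by omega,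
          show c + k + ℓ + ((n+(b-1)*ℓ) - m) + (m-(n+1)) = c + k + (b-1)*ℓ + (ℓ-1) by omega,
          sw_succ_l, show c + k + (b-1)*ℓ + (ℓ-1) + 1 = c + (k + b*ℓ) by omega, xcV, xw3]
    rcases le_or_gt m (n+k) with hmk | hmk
    · have hW2len : (U.drop (n+k-m)).length = m := by rw [List.length_drop, hU]; omega
      have hW2rs : RightSpecial (U.drop (n+k-m)) x := rs_drop hEss.1 _ (by rw [hU]; omega)
      have hW2suf : (U.drop (n+k-m)).drop (m-(n+1)) = y (pU+(k-1)) :: w := by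
        rw [List.drop_drop, show (n+k-m) + (m-(n+1)) = k-1 by omega, hUdk]
      have hne : subwordAt x (c + k + ℓ + ((n+(b-1)*ℓ) - m)) m ≠ U.drop (n+k-m) := by
        intro h
        have h2 := congrArg (List.drop (m-(n+1))) h
        rw [hSsuf, hW2suf] at h2
        exact KEYc ((List.cons.injEq _ _ _ _).mp h2 |>.1.symm)
      exact complexity_double (sw_len x _ m) hW2len hne hSrs hW2rs
    · obtain ⟨W2, hW2len, hW2rs, hW2suf0⟩ := hEss.2 m (by rw [hU]; omega)
      rw [hU] at hW2suf0
      have hW2suf : W2.drop (m-(n+1)) = y (pU+(k-1)) :: w := by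
        rw [show m-(n+1) = (m-(n+k)) + (k-1) by omega, ← List.drop_drop, hW2suf0, hUdk]
      have hne : subwordAt x (c + k + ℓ + ((n+(b-1)*ℓ) - m)) m ≠ W2 := by
        intro h
        have h2 := congrArg (List.drop (m-(n+1))) h
        rw [hSsuf, hW2suf] at h2
        exact KEYc ((List.cons.injEq _ _ _ _).mp h2 |>.1.symm)
      exact complexity_double (sw_len x _ m) hW2len hne hSrs hW2rs
  -- final arithmetic
  have hcomp' : ∀ m : ℕ, n ≤ m → 0 < m → (complexity x m : ℝ) ≤ ρ * m := by
    intro m hm hm0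
    have h := hcomp m hm
    rw [div_le_iff₀ (by exact_mod_cast hm0)] at h
    linarith
  have hMHn1 : n + 2 ≤ complexity x (n+1) := complexity_MH hx (n+1)
  have hstep0 : complexity x n + 1 ≤ complexity x (n+1) := by
    have := complexity_lt hx n; omega
  have hP1 : k + ℓ ≤ complexity x (n+1) := by omega
  have htel : complexity x (n+1) + 2*((b-1)*ℓ) ≤ complexity x (n+1+(b-1)*ℓ) := by
    have haux : ∀ t, t ≤ (b-1)*ℓ → complexity x (n+1) + 2*t ≤ complexity x (n+1+t) := by
      intro t
      induction t with
      | zero => intro _; simp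
      | succ t ih =>
        intro ht
        have h1 := ih (by omega)
        have h2 := F4 (n+1+t) (by omega) (by omega)
        rw [show n+1+(t+1) = (n+1+t)+1 by omega]
        omega
    exact haux _ le_rfl
  rcases Nat.eq_zero_or_pos ((b-1)*ℓ) with hL0 | hLpos
  · -- b = 1
    have hb1 : b = 1 := by
      rcases Nat.mul_eq_zero.mp hL0 with h | h
      · omega
      · omega
    subst hb1
    rcases le_or_gt (k+ℓ) (n+1) with hsmall | hbig
    · have h1 := hcomp' (n+1) (by omega) (by omega)
      have h2 : ((n:ℝ)+2) ≤ (complexity x (n+1) : ℝ) := by exact_mod_cast hMHn1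
      have h3 : (k:ℝ) + ℓ ≤ (n:ℝ)+1 := by exact_mod_cast hsmall
      push_cast at h1 ⊢
      norm_num
      linarith
    · rcases Nat.eq_zero_or_pos n with hn0 | hn1
      · exfalso
        have h2 : (2:ℝ) ≤ (complexity x 1 : ℝ) := by exact_mod_cast complexity_MH hx 1
        have h1 := hcomp 1 (by omega)
        rw [show ((1:ℕ):ℝ) = 1 by norm_num, div_one] at h1
        linarith
      · have h1 := hcomp' n (by omega) hn1
        have h2 : ((k:ℝ) + ℓ) ≤ (complexity x n : ℝ) + 1 := by exact_mod_cast F3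
        have h3 : ((n:ℝ) + 1) ≤ complexity x n := by exact_mod_cast complexity_MH hx n
        have hn1' : (1:ℝ) ≤ n := by exact_mod_cast hn1
        have hrho : 1 < ρ := by nlinarith
        push_cast at h1 ⊢
        norm_num
        nlinarith
  · -- b ≥ 2 effectively
    have hM := hcomp' (n+1+(b-1)*ℓ) (by omega) (by omega)
    have hc1 : ((k:ℝ) + ℓ + 2*(((b-1)*ℓ : ℕ):ℝ)) ≤ (complexity x (n+1+(b-1)*ℓ) : ℝ) := by
      have hnat : k + ℓ + 2*((b-1)*ℓ) ≤ complexity x (n+1+(b-1)*ℓ) := by omega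
      exact_mod_cast hnat
    have hL1R : (((b-1)*ℓ : ℕ):ℝ) = ((b:ℝ)-1)*(ℓ:ℝ) := by
      push_cast [Nat.cast_sub hb]
      ring
    have hL1pos : (0:ℝ) < (((b-1)*ℓ : ℕ):ℝ) := by exact_mod_cast hLpos
    have hMv : (complexity x (n+1+(b-1)*ℓ) : ℝ) ≤ ρ * ((n:ℝ)+1) + ρ * (((b-1)*ℓ:ℕ):ℝ) := by
      have : ((n+1+(b-1)*ℓ : ℕ):ℝ) = ((n:ℝ)+1) + (((b-1)*ℓ:ℕ):ℝ) := by push_cast; ring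
      rw [this] at hM
      linarith [hM]
    have hrl : ρ * (((b-1)*ℓ:ℕ):ℝ) < (4/3) * (((b-1)*ℓ:ℕ):ℝ) :=
      mul_lt_mul_of_pos_right hρ hL1pos
    have key : (k:ℝ) + ℓ + 2*(((b-1)*ℓ:ℕ):ℝ) - (4/3)*(((b-1)*ℓ:ℕ):ℝ) < ρ*((n:ℝ)+1) := by
      linarith
    rw [hL1R] at key
    have heq : (k:ℝ) + (2*(b:ℝ)+1)/3*(ℓ:ℝ)
        = (k:ℝ) + (ℓ:ℝ) + 2*(((b:ℝ)-1)*(ℓ:ℝ)) - (4/3)*(((b:ℝ)-1)*(ℓ:ℝ)) := by ring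
    rw [heq]
    exact key
end
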